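/- The unique real root α₂ of 4/2^α + 12/4^α + 60/8^α = 1 is strictly smaller than the unique real root α₁ of 4/2^α + 22/4^α = 1. -/

import Mathlib

/-!
Both left-hand sides are strictly decreasing in `α`, so it suffices to show that the second one
is `< 1` at `α₁`. With `x = 2 ^ α₁` the first equation reads `4 / x + 22 / x ^ 2 = 1`, which
forces `x > 6`; hence `60 / x ^ 3 < 10 / x ^ 2`, i.e. `12 / x ^ 2 + 60 / x ^ 3 < 22 / x ^ 2`.
-/

open Real

lemma strictAnti_const_div_rpow {b c : ℝ} (hb : 1 < b) (hc : 0 < c) :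
    StrictAnti fun α : ℝ => c / b ^ α := fun _ _ hαβ =>
  div_lt_div_of_pos_left hc (rpow_pos_of_pos (by linarith) _) (rpow_lt_rpow_of_exponent_lt hb hαβ)

lemma six_lt_of_four_div_add_twentytwo_div_sq {x : ℝ} (hx : 0 < x)
    (h : 4 / x + 22 / x ^ 2 = 1) : 6 < x := by
  field_simp at h
  nlinarith

lemma twelve_div_sq_add_sixty_div_cube_lt {x : ℝ} (hx : 6 < x) :
    12 / x ^ 2 + 60 / x ^ 3 < 22 / x ^ 2 := by
  have hx₀ : 0 < x := by linarith
  rw [div_add_div _ _ (by positivity) (by positivity), div_lt_div_iff₀ (by positivity) (by positivity)]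
  nlinarith [pow_pos hx₀ 4]

theorem root_h_lt_root_g (α₁ α₂ : ℝ)
    (h₁ : 4 / (2:ℝ) ^ α₁ + 22 / (4:ℝ) ^ α₁ = 1)
    (h₂ : 4 / (2:ℝ) ^ α₂ + 12 / (4:ℝ) ^ α₂ + 60 / (8:ℝ) ^ α₂ = 1) :
    α₂ < α₁ := by
  have hanti : StrictAnti fun α : ℝ => 4 / (2:ℝ) ^ α + 12 / (4:ℝ) ^ α + 60 / (8:ℝ) ^ α :=
    ((strictAnti_const_div_rpow (by norm_num) (by norm_num)).add
      (strictAnti_const_div_rpow (by norm_num) (by norm_num))).add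
      (strictAnti_const_div_rpow (by norm_num) (by norm_num))
  have h4 : (4:ℝ) ^ α₁ = ((2:ℝ) ^ α₁) ^ 2 := by
    rw [rpow_pow_comm (by norm_num)]; norm_num
  have h8 : (8:ℝ) ^ α₁ = ((2:ℝ) ^ α₁) ^ 3 := by
    rw [rpow_pow_comm (by norm_num)]; norm_num
  rw [h4] at h₁
  have hx : 6 < (2:ℝ) ^ α₁ := six_lt_of_four_div_add_twentytwo_div_sq (by positivity) h₁
  refine hanti.lt_iff_gt.mp ?_
  have := twelve_div_sq_add_sixty_div_cube_lt hx
  simp only [h4, h8]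
  linarith
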